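/- Let k be a field of characteristic not 2 and not 3, and let R = k[s,t,u,v]/(s², sv, t², tv, u², uv, v² − st − su). Then the elements s + t + 2u − v and 3s + t − 2u + 4v form an exact pair of zero divisors in R. -/

import Mathlib

/-!
The ring `R` has `k`-basis `1, s, t, u, v, st, su, tu`, so it is isomorphic to the ring
`R14Model k` of coordinate vectors multiplied as the relations dictate: evaluating the variables at
the coordinate generators kills the relations, and every class is represented by its normal form,
because a normal form times a variable is again a normal form modulo the relations.
In coordinates, `(s + t + 2u - v) y = 0` says that `y` has no constant term and that its linear
part satisfies three linear equations, whose solutions are the multiples of `3s + t - 2u + 4v`;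
and `m² = (3s + t - 2u + 4v) m` because the corresponding `3 × 3` system has determinant `12`.
The other annihilator is computed in the same way; all systems involved are invertible once
`12 ≠ 0`, which is where `char k ∉ {2, 3}` enters.
-/

open MvPolynomial

universe u

/-- The defining ideal of `R = k[s,t,u,v]/(s², sv, t², tv, u², uv, v² - st - su)`,
with `s = X 0`, `t = X 1`, `u = X 2`, `v = X 3`. -/
noncomputable def I14 (k : Type u) [CommRing k] : Ideal (MvPolynomial (Fin 4) k) :=
  Ideal.span {X 0 ^ 2, X 0 * X 3, X 1 ^ 2, X 1 * X 3, X 2 ^ 2, X 2 * X 3,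
    X 3 ^ 2 - X 0 * X 1 - X 0 * X 2}

/-- The ring `R = k[s,t,u,v]/(s², sv, t², tv, u², uv, v² - st - su)`. -/
abbrev R14 (k : Type u) [CommRing k] : Type u := MvPolynomial (Fin 4) k ⧸ I14 k

/-- The annihilator of an element of `R` as an ideal. -/
def annIdeal (R : Type u) [CommRing R] (a : R) : Ideal R :=
  LinearMap.ker (LinearMap.mulLeft R a)

section

variable {R S : Type*} [CommRing R] [CommRing S]

lemma mem_annIdeal {a x : R} : x ∈ annIdeal R a ↔ a * x = 0 := Iff.rfl

lemma annIdeal_eq_span_singleton_iff {a b : R} :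
    annIdeal R a = Ideal.span {b} ↔ a * b = 0 ∧ ∀ x, a * x = 0 → b ∣ x := by
  simp only [SetLike.ext_iff, mem_annIdeal, Ideal.mem_span_singleton]
  refine ⟨fun h => ⟨(h b).2 dvd_rfl, fun x => (h x).1⟩, fun ⟨hab, h⟩ x => ⟨h x, ?_⟩⟩
  rintro ⟨c, rfl⟩
  rw [← mul_assoc, hab, zero_mul]

lemma RingEquiv.annIdeal_eq_span_singleton_iff (e : R ≃+* S) {a b : R} :
    annIdeal S (e a) = Ideal.span {e b} ↔ annIdeal R a = Ideal.span {b} := by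
  simp only [_root_.annIdeal_eq_span_singleton_iff, ← map_mul, map_eq_zero_iff e e.injective,
    map_dvd_iff, e.surjective.forall]

end

@[ext]
structure R14Model (k : Type u) where
  (c s t u v st su tu : k)

namespace R14Model

variable {k : Type u} [CommRing k]

instance : Zero (R14Model k) := ⟨⟨0, 0, 0, 0, 0, 0, 0, 0⟩⟩
instance : One (R14Model k) := ⟨⟨1, 0, 0, 0, 0, 0, 0, 0⟩⟩
instance : NatCast (R14Model k) := ⟨fun n => ⟨n, 0, 0, 0, 0, 0, 0, 0⟩⟩
instance : IntCast (R14Model k) := ⟨fun n => ⟨n, 0, 0, 0, 0, 0, 0, 0⟩⟩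
instance : Add (R14Model k) := ⟨fun a b =>
  ⟨a.c + b.c, a.s + b.s, a.t + b.t, a.u + b.u, a.v + b.v, a.st + b.st, a.su + b.su, a.tu + b.tu⟩⟩
instance : Neg (R14Model k) := ⟨fun a => ⟨-a.c, -a.s, -a.t, -a.u, -a.v, -a.st, -a.su, -a.tu⟩⟩
instance : Sub (R14Model k) := ⟨fun a b =>
  ⟨a.c - b.c, a.s - b.s, a.t - b.t, a.u - b.u, a.v - b.v, a.st - b.st, a.su - b.su, a.tu - b.tu⟩⟩
-- The `a.v * b.v` terms come from `v² = st + su`; all monomials of degree three vanish in `R`.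
instance : Mul (R14Model k) := ⟨fun a b =>
  ⟨a.c * b.c,
   a.c * b.s + a.s * b.c,
   a.c * b.t + a.t * b.c,
   a.c * b.u + a.u * b.c,
   a.c * b.v + a.v * b.c,
   a.c * b.st + a.st * b.c + a.s * b.t + a.t * b.s + a.v * b.v,
   a.c * b.su + a.su * b.c + a.s * b.u + a.u * b.s + a.v * b.v,
   a.c * b.tu + a.tu * b.c + a.t * b.u + a.u * b.t⟩⟩

lemma zero_def : (0 : R14Model k) = ⟨0, 0, 0, 0, 0, 0, 0, 0⟩ := rfl
lemma one_def : (1 : R14Model k) = ⟨1, 0, 0, 0, 0, 0, 0, 0⟩ := rfl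
lemma natCast_def (n : ℕ) : (n : R14Model k) = ⟨n, 0, 0, 0, 0, 0, 0, 0⟩ := rfl
lemma intCast_def (n : ℤ) : (n : R14Model k) = ⟨n, 0, 0, 0, 0, 0, 0, 0⟩ := rfl
lemma ofNat_def (n : ℕ) [n.AtLeastTwo] :
    (OfNat.ofNat n : R14Model k) = ⟨OfNat.ofNat n, 0, 0, 0, 0, 0, 0, 0⟩ := rfl
lemma add_def (a b : R14Model k) : a + b =
    ⟨a.c + b.c, a.s + b.s, a.t + b.t, a.u + b.u, a.v + b.v, a.st + b.st, a.su + b.su,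
      a.tu + b.tu⟩ := rfl
lemma neg_def (a : R14Model k) : -a = ⟨-a.c, -a.s, -a.t, -a.u, -a.v, -a.st, -a.su, -a.tu⟩ := rfl
lemma sub_def (a b : R14Model k) : a - b =
    ⟨a.c - b.c, a.s - b.s, a.t - b.t, a.u - b.u, a.v - b.v, a.st - b.st, a.su - b.su,
      a.tu - b.tu⟩ := rfl
lemma mul_def (a b : R14Model k) : a * b =
    ⟨a.c * b.c, a.c * b.s + a.s * b.c, a.c * b.t + a.t * b.c, a.c * b.u + a.u * b.c,
      a.c * b.v + a.v * b.c, a.c * b.st + a.st * b.c + a.s * b.t + a.t * b.s + a.v * b.v,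
      a.c * b.su + a.su * b.c + a.s * b.u + a.u * b.s + a.v * b.v,
      a.c * b.tu + a.tu * b.c + a.t * b.u + a.u * b.t⟩ := rfl

instance : CommRing (R14Model k) where
  add_assoc a b c := by ext <;> simp only [add_def] <;> ring
  zero_add a := by ext <;> simp only [add_def, zero_def] <;> ring
  add_zero a := by ext <;> simp only [add_def, zero_def] <;> ring
  add_comm a b := by ext <;> simp only [add_def] <;> ring
  neg_add_cancel a := by ext <;> simp only [add_def, neg_def, zero_def] <;> ring
  sub_eq_add_neg a b := by ext <;> simp only [add_def, neg_def, sub_def] <;> ring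
  mul_assoc a b c := by ext <;> simp only [mul_def] <;> ring
  one_mul a := by ext <;> simp only [mul_def, one_def] <;> ring
  mul_one a := by ext <;> simp only [mul_def, one_def] <;> ring
  zero_mul a := by ext <;> simp only [mul_def, zero_def] <;> ring
  mul_zero a := by ext <;> simp only [mul_def, zero_def] <;> ring
  left_distrib a b c := by ext <;> simp only [mul_def, add_def] <;> ring
  right_distrib a b c := by ext <;> simp only [mul_def, add_def] <;> ring
  mul_comm a b := by ext <;> simp only [mul_def] <;> ring
  natCast_zero := by ext <;> simp [natCast_def, zero_def]
  natCast_succ n := by ext <;> simp [natCast_def, add_def, one_def]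
  intCast_ofNat n := by ext <;> simp [natCast_def, intCast_def]
  intCast_negSucc n := by ext <;> simp [natCast_def, intCast_def, neg_def]
  nsmul := nsmulRec
  zsmul := zsmulRec

instance : Algebra k (R14Model k) :=
  RingHom.toAlgebra
    { toFun a := ⟨a, 0, 0, 0, 0, 0, 0, 0⟩
      map_one' := rfl
      map_zero' := rfl
      map_add' a b := by ext <;> simp [add_def]
      map_mul' a b := by ext <;> simp [mul_def] }

lemma algebraMap_def (a : k) : algebraMap k (R14Model k) a = ⟨a, 0, 0, 0, 0, 0, 0, 0⟩ := rfl

def gen : Fin 4 → R14Model k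
  | 0 => ⟨0, 1, 0, 0, 0, 0, 0, 0⟩
  | 1 => ⟨0, 0, 1, 0, 0, 0, 0, 0⟩
  | 2 => ⟨0, 0, 0, 1, 0, 0, 0, 0⟩
  | 3 => ⟨0, 0, 0, 0, 1, 0, 0, 0⟩

lemma aeval_gen_eq_zero_of_mem_I14 {p : MvPolynomial (Fin 4) k} (hp : p ∈ I14 k) :
    aeval (gen (k := k)) p = 0 := by
  suffices I14 k ≤ RingHom.ker (aeval (R := k) (gen (k := k))) from this hp
  refine Ideal.span_le.2 ?_
  simp only [Set.insert_subset_iff, Set.singleton_subset_iff, SetLike.mem_coe, RingHom.mem_ker]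
  refine ⟨?_, ?_, ?_, ?_, ?_, ?_, ?_⟩ <;>
    simp only [map_sub, map_mul, map_pow, aeval_X] <;>
    ext <;> simp [gen, pow_two, mul_def, sub_def, zero_def]

end R14Model

namespace R14

variable {k : Type u} [CommRing k]

noncomputable def s : R14 k := Ideal.Quotient.mk _ (X 0)
noncomputable def t : R14 k := Ideal.Quotient.mk _ (X 1)
noncomputable def u : R14 k := Ideal.Quotient.mk _ (X 2)
noncomputable def v : R14 k := Ideal.Quotient.mk _ (X 3)

lemma mk_eq_zero_of_mem {p : MvPolynomial (Fin 4) k}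
    (hp : p ∈ ({X 0 ^ 2, X 0 * X 3, X 1 ^ 2, X 1 * X 3, X 2 ^ 2, X 2 * X 3,
      X 3 ^ 2 - X 0 * X 1 - X 0 * X 2} : Set (MvPolynomial (Fin 4) k))) :
    Ideal.Quotient.mk (I14 k) p = 0 :=
  Ideal.Quotient.eq_zero_iff_mem.2 (Ideal.subset_span hp)

section

variable (k)

lemma s_sq : (s : R14 k) ^ 2 = 0 := mk_eq_zero_of_mem (by simp)
lemma s_mul_v : (s : R14 k) * v = 0 := mk_eq_zero_of_mem (by simp)
lemma t_sq : (t : R14 k) ^ 2 = 0 := mk_eq_zero_of_mem (by simp)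
lemma t_mul_v : (t : R14 k) * v = 0 := mk_eq_zero_of_mem (by simp)
lemma u_sq : (u : R14 k) ^ 2 = 0 := mk_eq_zero_of_mem (by simp)
lemma u_mul_v : (u : R14 k) * v = 0 := mk_eq_zero_of_mem (by simp)
lemma v_sq : (v : R14 k) ^ 2 = s * t + s * u := by
  have h : (v : R14 k) ^ 2 - s * t - s * u = 0 := mk_eq_zero_of_mem (by simp)
  linear_combination h

lemma s_mul_t_mul_u : (s : R14 k) * t * u = 0 := by
  linear_combination v * t_mul_v k - s * t_sq k - t * v_sq k

end

noncomputable def toModel : R14 k →ₐ[k] R14Model k :=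
  Ideal.Quotient.liftₐ _ (aeval R14Model.gen) fun _ hp => R14Model.aeval_gen_eq_zero_of_mem_I14 hp

lemma toModel_mk (p : MvPolynomial (Fin 4) k) :
    toModel (Ideal.Quotient.mk _ p) = aeval R14Model.gen p :=
  rfl

noncomputable def ofModel (y : R14Model k) : R14 k :=
  algebraMap k _ y.c + algebraMap k _ y.s * s + algebraMap k _ y.t * t +
    algebraMap k _ y.u * u + algebraMap k _ y.v * v + algebraMap k _ y.st * (s * t) +
    algebraMap k _ y.su * (s * u) + algebraMap k _ y.tu * (t * u)

lemma ofModel_add (y z : R14Model k) : ofModel (y + z) = ofModel y + ofModel z := by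
  simp only [ofModel, R14Model.add_def, map_add]
  ring

lemma ofModel_algebraMap (a : k) : ofModel (algebraMap k _ a) = algebraMap k (R14 k) a := by
  simp [ofModel, R14Model.algebraMap_def]

lemma ofModel_gen (i : Fin 4) :
    ofModel (R14Model.gen i) = Ideal.Quotient.mk (I14 k) (X i) := by
  fin_cases i <;> simp [ofModel, R14Model.gen, s, t, u, v]

lemma ofModel_mul_gen (y : R14Model k) (i : Fin 4) :
    ofModel (y * R14Model.gen i) = ofModel y * ofModel (R14Model.gen i) := by
  fin_cases i <;> simp only [ofModel, R14Model.gen, R14Model.mul_def, mul_zero, mul_one, zero_mul,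
    add_zero, zero_add, map_zero, map_one] <;>
    set f := algebraMap k (R14 k)
  · linear_combination (-(f y.s + f y.st * t + f y.su * u)) * s_sq k - f y.v * s_mul_v k
      - f y.tu * s_mul_t_mul_u k
  · linear_combination (-(f y.t + f y.st * s + f y.tu * u)) * t_sq k - f y.v * t_mul_v k
      - f y.su * s_mul_t_mul_u k
  · linear_combination (-(f y.u + f y.su * s + f y.tu * t)) * u_sq k - f y.v * u_mul_v k
      - f y.st * s_mul_t_mul_u k
  · linear_combination -f y.v * v_sq k - (f y.s + f y.st * t + f y.su * u) * s_mul_v k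
      - (f y.t + f y.tu * u) * t_mul_v k - f y.u * u_mul_v k

lemma ofModel_toModel (x : R14 k) : ofModel (toModel x) = x := by
  obtain ⟨p, rfl⟩ := Ideal.Quotient.mk_surjective x
  induction p using MvPolynomial.induction_on with
  | C a =>
    rw [← MvPolynomial.algebraMap_eq, Ideal.Quotient.mk_algebraMap, AlgHom.commutes,
      ofModel_algebraMap]
  | add p q hp hq => rw [map_add, map_add, ofModel_add, hp, hq]
  | mul_X p i hp =>
    rw [map_mul, map_mul, toModel_mk (X i), aeval_X, ofModel_mul_gen, hp, ofModel_gen]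

lemma toModel_ofModel (y : R14Model k) : toModel (ofModel y) = y := by
  ext <;> simp [toModel_mk, ofModel, s, t, u, v, R14Model.gen, R14Model.add_def,
    R14Model.mul_def, R14Model.algebraMap_def]

variable (k) in
noncomputable def equivModel : R14 k ≃+* R14Model k :=
  RingEquiv.ofBijective toModel
    ⟨Function.LeftInverse.injective ofModel_toModel,
      Function.RightInverse.surjective toModel_ofModel⟩

lemma equivModel_apply (x : R14 k) : equivModel k x = toModel x := rfl

end R14

namespace R14Model

section

variable {k : Type u} [CommRing k]

def a : R14Model k := ⟨0, 1, 1, 2, -1, 0, 0, 0⟩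
def b : R14Model k := ⟨0, 3, 1, -2, 4, 0, 0, 0⟩

lemma a_mul (y : R14Model k) : a * y =
    ⟨0, y.c, y.c, 2 * y.c, -y.c, y.s + y.t - y.v, 2 * y.s + y.u - y.v, 2 * y.t + y.u⟩ := by
  ext <;> simp only [a, mul_def] <;> ring

lemma b_mul (y : R14Model k) : b * y =
    ⟨0, 3 * y.c, y.c, -2 * y.c, 4 * y.c, y.s + 3 * y.t + 4 * y.v, -2 * y.s + 3 * y.u + 4 * y.v,
      -2 * y.t + y.u⟩ := by
  ext <;> simp only [b, mul_def] <;> ring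

end

variable {k : Type u} [Field k]

lemma annIdeal_a_eq_span_b (h12 : (12 : k) ≠ 0) : annIdeal (R14Model k) a = Ideal.span {b} := by
  refine annIdeal_eq_span_singleton_iff.2 ⟨?_, fun y hy => ?_⟩
  · rw [a_mul]; ext <;> simp only [b, zero_def] <;> ring
  rw [a_mul, zero_def, mk.injEq] at hy
  obtain ⟨-, hc, -, -, -, hst, hsu, htu⟩ := hy
  -- the quadratic coordinates solve a `3 × 3` system of determinant `12`
  refine ⟨⟨y.t, (6 * y.st - 3 * y.su + 9 * y.tu) / 12, (2 * y.st + y.su - 3 * y.tu) / 12,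
    (4 * y.st + 2 * y.su + 6 * y.tu) / 12, 0, 0, 0, 0⟩, ?_⟩
  rw [b_mul]
  ext <;> dsimp only
  · exact hc
  · linear_combination hsu - hst - htu
  · linear_combination htu
  · linear_combination hsu - 2 * hst - htu
  all_goals field_simp; ring

lemma annIdeal_b_eq_span_a (h12 : (12 : k) ≠ 0) : annIdeal (R14Model k) b = Ideal.span {a} := by
  refine annIdeal_eq_span_singleton_iff.2 ⟨?_, fun y hy => ?_⟩
  · rw [b_mul]; ext <;> simp only [a, zero_def] <;> ring
  rw [b_mul, zero_def, mk.injEq] at hy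
  obtain ⟨-, -, hc, -, -, hst, hsu, htu⟩ := hy
  have hs : y.s = y.t := mul_left_cancel₀ h12 (by linear_combination 4 * (hst - hsu + 3 * htu))
  -- the quadratic coordinates solve a `3 × 3` system of determinant `-4`
  refine ⟨⟨y.t, (6 * y.st + 3 * y.su - 3 * y.tu) / 12, (6 * y.st - 3 * y.su + 3 * y.tu) / 12,
    (-12 * y.st + 6 * y.su + 6 * y.tu) / 12, 0, 0, 0, 0⟩, ?_⟩
  rw [a_mul]
  ext <;> dsimp only
  · exact hc
  · exact hs
  · linear_combination htu
  · exact mul_left_cancel₀ h12 (by linear_combination 3 * (2 * hst - hsu + 3 * htu) - 12 * hs)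
  all_goals field_simp; ring

end R14Model

namespace R14

variable {k : Type u} [CommRing k]

lemma equivModel_mk_a :
    equivModel k (Ideal.Quotient.mk _ (X 0 + X 1 + 2 * X 2 - X 3)) = R14Model.a := by
  rw [equivModel_apply, toModel_mk]
  ext <;> simp [R14Model.gen, R14Model.a, R14Model.mul_def, R14Model.add_def,
    R14Model.sub_def, R14Model.ofNat_def]

lemma equivModel_mk_b :
    equivModel k (Ideal.Quotient.mk _ (3 * X 0 + X 1 - 2 * X 2 + 4 * X 3)) = R14Model.b := by
  rw [equivModel_apply, toModel_mk]
  ext <;> simp [R14Model.gen, R14Model.b, R14Model.mul_def, R14Model.add_def,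
    R14Model.sub_def, R14Model.ofNat_def]

end R14

/-- over a field `k` of characteristic different from 2 and 3,
the elements `s + t + 2u - v` and `3s + t - 2u + 4v` form an exact pair of
zero divisors in `R = k[s,t,u,v]/(s², sv, t², tv, u², uv, v² - st - su)`. -/
theorem stmt14 (k : Type u) [Field k] (h2 : (2 : k) ≠ 0) (h3 : (3 : k) ≠ 0) :
    annIdeal (R14 k) (Ideal.Quotient.mk _ (X 0 + X 1 + 2 * X 2 - X 3)) =
      Ideal.span {Ideal.Quotient.mk _ (3 * X 0 + X 1 - 2 * X 2 + 4 * X 3)} ∧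
    annIdeal (R14 k) (Ideal.Quotient.mk _ (3 * X 0 + X 1 - 2 * X 2 + 4 * X 3)) =
      Ideal.span {Ideal.Quotient.mk _ (X 0 + X 1 + 2 * X 2 - X 3)} := by
  have h12 : (12 : k) ≠ 0 := by
    convert mul_ne_zero (mul_ne_zero h2 h2) h3 using 1
    norm_num
  rw [← (R14.equivModel k).annIdeal_eq_span_singleton_iff,
    ← (R14.equivModel k).annIdeal_eq_span_singleton_iff, R14.equivModel_mk_a,
    R14.equivModel_mk_b]
  exact ⟨R14Model.annIdeal_a_eq_span_b h12, R14Model.annIdeal_b_eq_span_a h12⟩
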